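/- arXiv:2311.18783 — 6 statements merged into one kernel-verified Lean document; each statement's English description precedes it below -/
import Mathlib

section
/- Let A be a symmetric positive definite n×n real matrix and let Q_i ∈ ℝ^{n×n_i}, i = 1,…,N, be rectangular matrices. Define k̃₀ := max_{1≤i≤N} #{ j : Q_jᵀ A Q_i ≠ 0 }. Then for any vectors U_i ∈ ℝ^{n_i}, (∑_{i=1}^N Q_i U_i)ᵀ A (∑_{i=1}^N Q_i U_i) ≤ k̃₀ ∑_{i=1}^N U_iᵀ (Q_iᵀ A Q_i) U_i. -/
/-!
Write `v i = Q i *ᵥ U i`, so that the left side is `∑ i, ∑ j, ⟪v i, v j⟫_A` and `⟪v i, v j⟫_A`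
vanishes unless `Q jᵀ A Q i ≠ 0`. Bounding each surviving cross term by
`(⟪v i, v i⟫_A + ⟪v j, v j⟫_A) / 2` and counting, with the symmetry of the coupling relation,
how often each diagonal term occurs gives at most `k̃₀` copies of every `⟪v i, v i⟫_A`.
-/

open Matrix Finset
open scoped Classical

variable {m ι : Type*} [Fintype m] [Fintype ι]

lemma Matrix.PosSemidef.two_mul_dotProduct_mulVec_le {A : Matrix m m ℝ} (hA : A.PosSemidef)
    (x y : m → ℝ) : 2 * (x ⬝ᵥ A *ᵥ y) ≤ x ⬝ᵥ A *ᵥ x + y ⬝ᵥ A *ᵥ y := by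
  have hxy : y ⬝ᵥ A *ᵥ x = x ⬝ᵥ A *ᵥ y := by
    rw [dotProduct_mulVec, ← mulVec_transpose, ← conjTranspose_eq_transpose_of_trivial,
      hA.isHermitian.eq, dotProduct_comm]
  have h := hA.dotProduct_mulVec_nonneg (x - y)
  simp only [star_trivial, mulVec_sub, dotProduct_sub, sub_dotProduct] at h
  linarith

lemma Finset.sum_sum_filter_eq_sum_card_smul {M : Type*} [AddCommMonoid M] {S : ι → ι → Prop}
    [DecidableRel S] (hS : Std.Symm S) (f : ι → M) :
    ∑ i, ∑ j ∈ univ.filter (S i), f j = ∑ i, #(univ.filter (S i)) • f i := by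
  simp only [← sum_const, sum_filter]
  rw [sum_comm]
  exact sum_congr rfl fun i _ => sum_congr rfl fun j _ =>
    if_congr ⟨hS.symm j i, hS.symm i j⟩ rfl rfl

theorem Matrix.PosSemidef.dotProduct_mulVec_sum_le {A : Matrix m m ℝ} (hA : A.PosSemidef)
    (v : ι → m → ℝ) {S : ι → ι → Prop} [DecidableRel S] (hS : Std.Symm S)
    (hv : ∀ i j, ¬ S i j → v i ⬝ᵥ A *ᵥ v j = 0) :
    (∑ i, v i) ⬝ᵥ A *ᵥ ∑ i, v i ≤
      ((univ.sup fun i => #(univ.filter (S i)) : ℕ) : ℝ) * ∑ i, v i ⬝ᵥ A *ᵥ v i := by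
  set B : ι → ι → ℝ := fun i j => v i ⬝ᵥ A *ᵥ v j
  have hB_nonneg (i : ι) : 0 ≤ B i i := by
    simpa using hA.dotProduct_mulVec_nonneg (v i)
  have hexpand : (∑ i, v i) ⬝ᵥ A *ᵥ ∑ i, v i = ∑ i, ∑ j ∈ univ.filter (S i), B i j := by
    rw [mulVec_sum, sum_dotProduct]
    simp only [dotProduct_sum]
    refine sum_congr rfl fun i _ => (sum_filter_of_ne fun j _ hne => ?_).symm
    exact not_not.mp fun h => hne (hv i j h)
  calc (∑ i, v i) ⬝ᵥ A *ᵥ ∑ i, v i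
      = ∑ i, ∑ j ∈ univ.filter (S i), B i j := hexpand
    _ ≤ ∑ i, ∑ j ∈ univ.filter (S i), (B i i + B j j) / 2 := by
        gcongr with i _ j _
        linarith [hA.two_mul_dotProduct_mulVec_le (v i) (v j)]
    _ = ∑ i, (#(univ.filter (S i)) : ℝ) * B i i := by
        simp only [add_div, sum_add_distrib, sum_sum_filter_eq_sum_card_smul hS, sum_const,
          nsmul_eq_mul]
        rw [← sum_add_distrib]
        exact sum_congr rfl fun i _ => by ring
    _ ≤ ∑ i, ((univ.sup fun i => #(univ.filter (S i)) : ℕ) : ℝ) * B i i := by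
        gcongr with i _
        · exact hB_nonneg i
        · exact le_sup (f := fun i => #(univ.filter (S i))) (mem_univ i)
    _ = _ := (mul_sum _ _ _).symm

lemma Matrix.dotProduct_transpose_mul_mul_mulVec {n₁ n₂ : Type*} [Fintype n₁] [Fintype n₂]
    (A : Matrix m m ℝ) (P : Matrix m n₁ ℝ) (Q : Matrix m n₂ ℝ) (x : n₁ → ℝ) (y : n₂ → ℝ) :
    x ⬝ᵥ (Pᵀ * A * Q) *ᵥ y = (P *ᵥ x) ⬝ᵥ A *ᵥ (Q *ᵥ y) := by
  simp only [dotProduct_mulVec, vecMul_mulVec, vecMul_vecMul, Matrix.mul_assoc]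

lemma Matrix.IsHermitian.transpose_transpose_mul_mul {n₁ n₂ : Type*} {A : Matrix m m ℝ}
    (hA : A.IsHermitian) (P : Matrix m n₁ ℝ) (Q : Matrix m n₂ ℝ) :
    (Pᵀ * A * Q)ᵀ = Qᵀ * A * P := by
  rw [transpose_mul, transpose_mul, transpose_transpose,
    ← conjTranspose_eq_transpose_of_trivial A, hA.eq, Matrix.mul_assoc]

theorem stmt0 {n N : ℕ} (ni : Fin N → ℕ)
    (A : Matrix (Fin n) (Fin n) ℝ) (hA : A.PosDef)
    (Q : ∀ i : Fin N, Matrix (Fin n) (Fin (ni i)) ℝ)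
    (U : ∀ i : Fin N, Fin (ni i) → ℝ) :
    (∑ i, Q i *ᵥ U i) ⬝ᵥ (A *ᵥ ∑ i, Q i *ᵥ U i) ≤
      ((Finset.univ.sup fun i : Fin N =>
          (Finset.univ.filter fun j : Fin N => (Q j)ᵀ * A * Q i ≠ 0).card : ℕ) : ℝ) *
        ∑ i, U i ⬝ᵥ (((Q i)ᵀ * A * Q i) *ᵥ U i) := by
  have hA' := hA.posSemidef
  have hcoupling : Std.Symm fun i j : Fin N => (Q j)ᵀ * A * Q i ≠ 0 := ⟨fun i j hij h =>
    hij (by rw [← hA'.isHermitian.transpose_transpose_mul_mul, h, transpose_zero])⟩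
  simp only [dotProduct_transpose_mul_mul_mulVec]
  refine hA'.dotProduct_mulVec_sum_le (fun i => Q i *ᵥ U i) hcoupling fun i j hij => ?_
  rw [← dotProduct_transpose_mul_mul_mulVec, ← hA'.isHermitian.transpose_transpose_mul_mul,
    not_not.mp hij, transpose_zero, zero_mulVec, dotProduct_zero]
end

section
/- Let H and H_D be finite-dimensional real inner product spaces, A : H → H and B : H_D → H_D symmetric positive definite linear operators (defining bilinear forms a(u,v) = (Au,v) and b(u_D,v_D) = (Bu_D,v_D)_D). Suppose R : H_D → H is a surjective linear map such that (i) a(Ru_D, Ru_D) ≤ c_R b(u_D, u_D) for all u_D ∈ H_D, and (ii) for every u ∈ H there exists u_D ∈ H_D with R u_D = u and c_T b(u_D,u_D) ≤ a(u,u). Then for all u ∈ H, c_T a(u,u) ≤ a(R B⁻¹ R* A u, u) ≤ c_R a(u,u), where R* is the adjoint of R with respect to the two inner products. -/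
/-!
Let `v := B⁻¹ R* A u`, so that `b(v, w) = a(u, R w)` for every `w`. Taking `w = v` gives
`a(R v, u) = b(v, v)`. The upper bound is Cauchy–Schwarz for `a`:
`b(v, v)² = a(R v, u)² ≤ a(R v, R v) a(u, u) ≤ c_R b(v, v) a(u, u)`.
For `c_T > 0` the lower bound is Cauchy–Schwarz for `b` applied to a stable lift `u_D` of `u`:
`a(u, u)² = b(v, u_D)² ≤ b(v, v) b(u_D, u_D) ≤ b(v, v) a(u, u) / c_T`.
-/

open scoped RealInnerProductSpace

namespace LinearMap.IsPositive

variable {E : Type*} [NormedAddCommGroup E] [InnerProductSpace ℝ E]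

theorem inner_sq_le_inner_mul_inner {T : E →ₗ[ℝ] E} (hT : T.IsPositive) (x y : E) :
    ⟪T x, y⟫ ^ 2 ≤ ⟪T x, x⟫ * ⟪T y, y⟫ :=
  LinearMap.BilinForm.apply_sq_le_of_symm (innerₗ E ∘ₗ T) hT.inner_nonneg_left
    ⟨fun x y => by simp [hT.isSymmetric x y, real_inner_comm]⟩ x y

theorem of_inner_pos {T : E →ₗ[ℝ] E} (hsymm : T.IsSymmetric)
    (hpos : ∀ x, x ≠ 0 → 0 < ⟪T x, x⟫) : T.IsPositive := by
  refine (T.isPositive_iff).2 ⟨hsymm, fun x => ?_⟩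
  rcases eq_or_ne x 0 with rfl | hx
  · simp
  · exact (hpos x hx).le

end LinearMap.IsPositive

section FictitiousSpace

variable {H HD : Type*} [NormedAddCommGroup H] [InnerProductSpace ℝ H]
  [NormedAddCommGroup HD] [InnerProductSpace ℝ HD]
  {A : H →ₗ[ℝ] H} {B : HD →ₗ[ℝ] HD} {R : HD →ₗ[ℝ] H} {u : H} {v : HD}

theorem inner_map_lift_eq_inner_self (hA : A.IsSymmetric)
    (hv : ∀ w, ⟪B v, w⟫ = ⟪A u, R w⟫) : ⟪A (R v), u⟫ = ⟪B v, v⟫ := by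
  rw [hv, hA, real_inner_comm]

theorem mul_inner_map_nonneg_of_continuity (hA : A.IsPositive) (hB : B.IsPositive) {cR : ℝ}
    {w : HD} (hcont : ⟪A (R w), R w⟫ ≤ cR * ⟪B w, w⟫) : 0 ≤ cR * ⟪A (R w), R w⟫ := by
  have hAw := hA.inner_nonneg_left (R w)
  rcases le_or_gt 0 cR with hcR | hcR
  · exact mul_nonneg hcR hAw
  · have hzero : ⟪A (R w), R w⟫ = 0 := le_antisymm
      (hcont.trans (mul_nonpos_of_nonpos_of_nonneg hcR.le (hB.inner_nonneg_left w))) hAw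
    rw [hzero, mul_zero]

theorem inner_map_lift_le_of_continuity (hA : A.IsPositive) (hB : B.IsPositive)
    (hv : ∀ w, ⟪B v, w⟫ = ⟪A u, R w⟫) {cR : ℝ}
    (hcont : ⟪A (R v), R v⟫ ≤ cR * ⟪B v, v⟫) (hcRu : 0 ≤ cR * ⟪A u, u⟫) :
    ⟪A (R v), u⟫ ≤ cR * ⟪A u, u⟫ := by
  rw [inner_map_lift_eq_inner_self hA.isSymmetric hv]
  have hcs : ⟪B v, v⟫ * ⟪B v, v⟫ ≤ ⟪B v, v⟫ * (cR * ⟪A u, u⟫) :=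
    calc ⟪B v, v⟫ * ⟪B v, v⟫ = ⟪A (R v), u⟫ ^ 2 := by
          rw [inner_map_lift_eq_inner_self hA.isSymmetric hv, sq]
      _ ≤ ⟪A (R v), R v⟫ * ⟪A u, u⟫ := hA.inner_sq_le_inner_mul_inner _ _
      _ ≤ cR * ⟪B v, v⟫ * ⟪A u, u⟫ := by gcongr; exact hA.inner_nonneg_left u
      _ = ⟪B v, v⟫ * (cR * ⟪A u, u⟫) := by ring
  rcases (hB.inner_nonneg_left v).eq_or_lt with hzero | hpos
  · rw [← hzero]
    exact hcRu
  · exact le_of_mul_le_mul_left hcs hpos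

theorem mul_inner_le_inner_lift_of_stable (hA : A.IsPositive) (hB : B.IsPositive)
    (hv : ∀ w, ⟪B v, w⟫ = ⟪A u, R w⟫) {cT : ℝ} {uD : HD} (huD : R uD = u)
    (hstab : cT * ⟪B uD, uD⟫ ≤ ⟪A u, u⟫) :
    cT * ⟪A u, u⟫ ≤ ⟪B v, v⟫ := by
  have hvv := hB.inner_nonneg_left v
  rcases le_or_gt cT 0 with hcT | hcT
  · exact (mul_nonpos_of_nonpos_of_nonneg hcT (hA.inner_nonneg_left u)).trans hvv
  have hcs : ⟪A u, u⟫ * (cT * ⟪A u, u⟫) ≤ ⟪A u, u⟫ * ⟪B v, v⟫ :=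
    calc ⟪A u, u⟫ * (cT * ⟪A u, u⟫) = cT * ⟪B v, uD⟫ ^ 2 := by rw [hv, huD]; ring
      _ ≤ cT * (⟪B v, v⟫ * ⟪B uD, uD⟫) := by gcongr; exact hB.inner_sq_le_inner_mul_inner _ _
      _ = ⟪B v, v⟫ * (cT * ⟪B uD, uD⟫) := by ring
      _ ≤ ⟪B v, v⟫ * ⟪A u, u⟫ := by gcongr
      _ = ⟪A u, u⟫ * ⟪B v, v⟫ := mul_comm _ _
  rcases (hA.inner_nonneg_left u).eq_or_lt with hzero | hpos
  · rw [← hzero, mul_zero]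
    exact hvv
  · exact le_of_mul_le_mul_left hcs hpos

end FictitiousSpace

theorem stmt1_general {H HD : Type*}
    [NormedAddCommGroup H] [InnerProductSpace ℝ H] [FiniteDimensional ℝ H]
    [NormedAddCommGroup HD] [InnerProductSpace ℝ HD] [FiniteDimensional ℝ HD]
    (A : H →ₗ[ℝ] H) (B : HD →ₗ[ℝ] HD)
    (hAsym : ∀ u v : H, ⟪A u, v⟫ = ⟪u, A v⟫)
    (hApos : ∀ u : H, u ≠ 0 → 0 < ⟪A u, u⟫)
    (hBsym : ∀ uD vD : HD, ⟪B uD, vD⟫ = ⟪uD, B vD⟫)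
    (hBpos : ∀ uD : HD, uD ≠ 0 → 0 < ⟪B uD, uD⟫)
    (Binv : HD →ₗ[ℝ] HD)
    (hBinv₂ : B ∘ₗ Binv = LinearMap.id)
    (R : HD →ₗ[ℝ] H)
    (cR cT : ℝ)
    (hcont : ∀ uD : HD, ⟪A (R uD), R uD⟫ ≤ cR * ⟪B uD, uD⟫)
    (hstab : ∀ u : H, ∃ uD : HD, R uD = u ∧ cT * ⟪B uD, uD⟫ ≤ ⟪A u, u⟫) :
    ∀ u : H,
      cT * ⟪A u, u⟫ ≤ ⟪A (R (Binv (LinearMap.adjoint R (A u)))), u⟫ ∧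
      ⟪A (R (Binv (LinearMap.adjoint R (A u)))), u⟫ ≤ cR * ⟪A u, u⟫ := by
  have hA := LinearMap.IsPositive.of_inner_pos hAsym hApos
  have hB := LinearMap.IsPositive.of_inner_pos hBsym hBpos
  intro u
  set v := Binv (LinearMap.adjoint R (A u))
  have hv : ∀ w, ⟪B v, w⟫ = ⟪A u, R w⟫ := fun w => by
    rw [show B v = LinearMap.adjoint R (A u) from LinearMap.congr_fun hBinv₂ _,
      LinearMap.adjoint_inner_left]
  obtain ⟨uD, huD, hstab_u⟩ := hstab u
  have hcRu : 0 ≤ cR * ⟪A u, u⟫ := huD ▸ mul_inner_map_nonneg_of_continuity hA hB (hcont uD)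
  refine ⟨?_, inner_map_lift_le_of_continuity hA hB hv (hcont v) hcRu⟩
  rw [inner_map_lift_eq_inner_self hA.isSymmetric hv]
  exact mul_inner_le_inner_lift_of_stable hA hB hv huD hstab_u

theorem stmt1 {H HD : Type*}
    [NormedAddCommGroup H] [InnerProductSpace ℝ H] [FiniteDimensional ℝ H]
    [NormedAddCommGroup HD] [InnerProductSpace ℝ HD] [FiniteDimensional ℝ HD]
    (A : H →ₗ[ℝ] H) (B : HD →ₗ[ℝ] HD)
    (hAsym : ∀ u v : H, ⟪A u, v⟫ = ⟪u, A v⟫)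
    (hApos : ∀ u : H, u ≠ 0 → 0 < ⟪A u, u⟫)
    (hBsym : ∀ uD vD : HD, ⟪B uD, vD⟫ = ⟪uD, B vD⟫)
    (hBpos : ∀ uD : HD, uD ≠ 0 → 0 < ⟪B uD, uD⟫)
    (Binv : HD →ₗ[ℝ] HD)
    (hBinv₁ : Binv ∘ₗ B = LinearMap.id) (hBinv₂ : B ∘ₗ Binv = LinearMap.id)
    (R : HD →ₗ[ℝ] H) (hR : Function.Surjective R)
    (cR cT : ℝ)
    (hcont : ∀ uD : HD, ⟪A (R uD), R uD⟫ ≤ cR * ⟪B uD, uD⟫)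
    (hstab : ∀ u : H, ∃ uD : HD, R uD = u ∧ cT * ⟪B uD, uD⟫ ≤ ⟪A u, u⟫) :
    ∀ u : H,
      cT * ⟪A u, u⟫ ≤ ⟪A (R (Binv (LinearMap.adjoint R (A u)))), u⟫ ∧
      ⟪A (R (Binv (LinearMap.adjoint R (A u)))), u⟫ ≤ cR * ⟪A u, u⟫ :=
  stmt1_general A B hAsym hApos hBsym hBpos Binv hBinv₂ R cR cT hcont hstab
end

section
/- Under the hypotheses of the Fictitious Space Lemma (surjective R with continuity constant c_R and stable decomposition constant c_T), all eigenvalues of the operator R B⁻¹ R* A lie in the interval [c_T, c_R], and hence the spectral condition number of R B⁻¹ R* A satisfies κ₂(R B⁻¹ R* A) ≤ c_R / c_T. -/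
/-!
For an eigenpair `(μ, u)` of `R B⁻¹ R* A`, the fictitious vector `v_D = B⁻¹ R* A u` satisfies
`R v_D = μ u` and `b(v_D, w_D) = a(u, R w_D)`, hence `b(v_D, v_D) = μ a(u, u)`. Continuity applied
to `v_D` gives `μ² a(u, u) ≤ c_R μ a(u, u)`. For a stable decomposition `u_D` of `u`, Cauchy–Schwarz
for `b` gives `a(u, u)² = b(v_D, u_D)² ≤ μ a(u, u) b(u_D, u_D) ≤ μ a(u, u)² / c_T`.
-/

open scoped RealInnerProductSpace

namespace LinearMap

variable {E : Type*} [NormedAddCommGroup E] [InnerProductSpace ℝ E]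

theorem IsPositive.real_inner_map_sq_le {T : E →ₗ[ℝ] E} (hT : T.IsPositive) (x y : E) :
    ⟪T x, y⟫ ^ 2 ≤ ⟪T x, x⟫ * ⟪T y, y⟫ :=
  BilinForm.apply_sq_le_of_symm (innerₗ E ∘ₗ T) hT.inner_nonneg_left
    ⟨fun x y => by simp [hT.isSymmetric x y, real_inner_comm]⟩ x y

end LinearMap

section FictitiousSpace

variable {H HD : Type*}
  [NormedAddCommGroup H] [InnerProductSpace ℝ H] [FiniteDimensional ℝ H]
  [NormedAddCommGroup HD] [InnerProductSpace ℝ HD] [FiniteDimensional ℝ HD]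
  {A : H →ₗ[ℝ] H} {B Binv : HD →ₗ[ℝ] HD} {R : HD →ₗ[ℝ] H}

theorem inner_map_rightInverse_adjoint (hBinv : B ∘ₗ Binv = LinearMap.id) (h : H) (wD : HD) :
    ⟪B (Binv (LinearMap.adjoint R h)), wD⟫ = ⟪h, R wD⟫ := by
  rw [← LinearMap.comp_apply B Binv, hBinv, LinearMap.id_apply, LinearMap.adjoint_inner_left]

theorem inner_map_self_eq_of_hasEigenvector {μ : ℝ} {u : H}
    (hu : Module.End.HasEigenvector (R ∘ₗ Binv ∘ₗ LinearMap.adjoint R ∘ₗ A) μ u)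
    (hBinv : B ∘ₗ Binv = LinearMap.id) :
    ⟪B (Binv (LinearMap.adjoint R (A u))), Binv (LinearMap.adjoint R (A u))⟫ = μ * ⟪A u, u⟫ := by
  have hR : R (Binv (LinearMap.adjoint R (A u))) = μ • u := hu.apply_eq_smul
  rw [inner_map_rightInverse_adjoint hBinv, hR, real_inner_smul_right]

theorem stable_le_eigenvalue_of_hasEigenvector {cT μ : ℝ} {u : H}
    (hu : Module.End.HasEigenvector (R ∘ₗ Binv ∘ₗ LinearMap.adjoint R ∘ₗ A) μ u)
    (hBinv : B ∘ₗ Binv = LinearMap.id) (hB : B.IsPositive) (hAu : 0 < ⟪A u, u⟫)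
    (hstab : ∃ uD : HD, R uD = u ∧ cT * ⟪B uD, uD⟫ ≤ ⟪A u, u⟫) :
    cT ≤ μ := by
  obtain ⟨uD, hRuD, huD⟩ := hstab
  set vD := Binv (LinearMap.adjoint R (A u))
  have hvv : ⟪B vD, vD⟫ = μ * ⟪A u, u⟫ := inner_map_self_eq_of_hasEigenvector hu hBinv
  have hvu : ⟪B vD, uD⟫ = ⟪A u, u⟫ := by rw [inner_map_rightInverse_adjoint hBinv, hRuD]
  have hμ : 0 ≤ μ := nonneg_of_mul_nonneg_left (hvv ▸ hB.inner_nonneg_left vD) hAu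
  have hau_le : ⟪A u, u⟫ ≤ μ * ⟪B uD, uD⟫ := by
    have := hB.real_inner_map_sq_le vD uD
    rw [hvu, hvv] at this
    exact le_of_mul_le_mul_left (by linarith) hAu
  obtain hcT | hcT := le_total cT 0
  · exact hcT.trans hμ
  refine le_of_mul_le_mul_right ?_ hAu
  calc cT * ⟪A u, u⟫ ≤ cT * (μ * ⟪B uD, uD⟫) := mul_le_mul_of_nonneg_left hau_le hcT
    _ = μ * (cT * ⟪B uD, uD⟫) := by ring
    _ ≤ μ * ⟪A u, u⟫ := mul_le_mul_of_nonneg_left huD hμ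

theorem eigenvalue_le_continuity_of_hasEigenvector {cR μ : ℝ} {u : H}
    (hu : Module.End.HasEigenvector (R ∘ₗ Binv ∘ₗ LinearMap.adjoint R ∘ₗ A) μ u)
    (hBinv : B ∘ₗ Binv = LinearMap.id) (hAu : 0 < ⟪A u, u⟫) (hμ : 0 < μ)
    (hcont : ∀ uD : HD, ⟪A (R uD), R uD⟫ ≤ cR * ⟪B uD, uD⟫) :
    μ ≤ cR := by
  set vD := Binv (LinearMap.adjoint R (A u))
  have hRvD : R vD = μ • u := hu.apply_eq_smul
  have hvv : ⟪B vD, vD⟫ = μ * ⟪A u, u⟫ := inner_map_self_eq_of_hasEigenvector hu hBinv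
  have h := hcont vD
  rw [hvv, hRvD, map_smul, real_inner_smul_left, real_inner_smul_right] at h
  exact le_of_mul_le_mul_right h (mul_pos hμ hAu)

theorem eigenvalue_mem_Icc_of_hasEigenvalue {cR cT μ : ℝ}
    (hμ : Module.End.HasEigenvalue (R ∘ₗ Binv ∘ₗ LinearMap.adjoint R ∘ₗ A) μ)
    (hApos : ∀ u : H, u ≠ 0 → 0 < ⟪A u, u⟫) (hB : B.IsPositive)
    (hBinv : B ∘ₗ Binv = LinearMap.id) (hcT : 0 < cT)
    (hcont : ∀ uD : HD, ⟪A (R uD), R uD⟫ ≤ cR * ⟪B uD, uD⟫)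
    (hstab : ∀ u : H, ∃ uD : HD, R uD = u ∧ cT * ⟪B uD, uD⟫ ≤ ⟪A u, u⟫) :
    μ ∈ Set.Icc cT cR := by
  obtain ⟨u, hu⟩ := hμ.exists_hasEigenvector
  have hAu := hApos u hu.2
  have hlow := stable_le_eigenvalue_of_hasEigenvector hu hBinv hB hAu (hstab u)
  exact ⟨hlow, eigenvalue_le_continuity_of_hasEigenvector hu hBinv hAu (hcT.trans_le hlow) hcont⟩

end FictitiousSpace

theorem stmt2_general {H HD : Type*}
    [NormedAddCommGroup H] [InnerProductSpace ℝ H] [FiniteDimensional ℝ H]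
    [NormedAddCommGroup HD] [InnerProductSpace ℝ HD] [FiniteDimensional ℝ HD]
    (A : H →ₗ[ℝ] H) (B : HD →ₗ[ℝ] HD)
    (hApos : ∀ u : H, u ≠ 0 → 0 < ⟪A u, u⟫)
    (hBsym : ∀ uD vD : HD, ⟪B uD, vD⟫ = ⟪uD, B vD⟫)
    (hBpos : ∀ uD : HD, uD ≠ 0 → 0 < ⟪B uD, uD⟫)
    (Binv : HD →ₗ[ℝ] HD)
    (hBinv₂ : B ∘ₗ Binv = LinearMap.id)
    (R : HD →ₗ[ℝ] H)
    (cR cT : ℝ) (hcT : 0 < cT)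
    (hcont : ∀ uD : HD, ⟪A (R uD), R uD⟫ ≤ cR * ⟪B uD, uD⟫)
    (hstab : ∀ u : H, ∃ uD : HD, R uD = u ∧ cT * ⟪B uD, uD⟫ ≤ ⟪A u, u⟫) :
    (∀ μ : ℝ,
        Module.End.HasEigenvalue
          (R ∘ₗ Binv ∘ₗ LinearMap.adjoint R ∘ₗ A : Module.End ℝ H) μ →
        μ ∈ Set.Icc cT cR) ∧
    (∀ μ₁ μ₂ : ℝ,
        Module.End.HasEigenvalue
          (R ∘ₗ Binv ∘ₗ LinearMap.adjoint R ∘ₗ A : Module.End ℝ H) μ₁ →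
        Module.End.HasEigenvalue
          (R ∘ₗ Binv ∘ₗ LinearMap.adjoint R ∘ₗ A : Module.End ℝ H) μ₂ →
        μ₁ / μ₂ ≤ cR / cT) := by
  have hB : B.IsPositive := by
    refine (B.isPositive_iff).2 ⟨hBsym, fun uD => ?_⟩
    rcases eq_or_ne uD 0 with rfl | huD
    · simp
    · exact (hBpos uD huD).le
  have hIcc μ (hμ : Module.End.HasEigenvalue (R ∘ₗ Binv ∘ₗ LinearMap.adjoint R ∘ₗ A) μ) :=
    eigenvalue_mem_Icc_of_hasEigenvalue hμ hApos hB hBinv₂ hcT hcont hstab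
  refine ⟨hIcc, fun μ₁ μ₂ hμ₁ hμ₂ => ?_⟩
  obtain ⟨hlow₁, hhigh₁⟩ := hIcc μ₁ hμ₁
  exact div_le_div₀ (hcT.le.trans (hlow₁.trans hhigh₁)) hhigh₁ hcT (hIcc μ₂ hμ₂).1

theorem stmt2 {H HD : Type*}
    [NormedAddCommGroup H] [InnerProductSpace ℝ H] [FiniteDimensional ℝ H]
    [NormedAddCommGroup HD] [InnerProductSpace ℝ HD] [FiniteDimensional ℝ HD]
    (A : H →ₗ[ℝ] H) (B : HD →ₗ[ℝ] HD)
    (hAsym : ∀ u v : H, ⟪A u, v⟫ = ⟪u, A v⟫)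
    (hApos : ∀ u : H, u ≠ 0 → 0 < ⟪A u, u⟫)
    (hBsym : ∀ uD vD : HD, ⟪B uD, vD⟫ = ⟪uD, B vD⟫)
    (hBpos : ∀ uD : HD, uD ≠ 0 → 0 < ⟪B uD, uD⟫)
    (Binv : HD →ₗ[ℝ] HD)
    (hBinv₁ : Binv ∘ₗ B = LinearMap.id) (hBinv₂ : B ∘ₗ Binv = LinearMap.id)
    (R : HD →ₗ[ℝ] H) (hR : Function.Surjective R)
    (cR cT : ℝ) (hcT : 0 < cT)
    (hcont : ∀ uD : HD, ⟪A (R uD), R uD⟫ ≤ cR * ⟪B uD, uD⟫)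
    (hstab : ∀ u : H, ∃ uD : HD, R uD = u ∧ cT * ⟪B uD, uD⟫ ≤ ⟪A u, u⟫) :
    (∀ μ : ℝ,
        Module.End.HasEigenvalue
          (R ∘ₗ Binv ∘ₗ LinearMap.adjoint R ∘ₗ A : Module.End ℝ H) μ →
        μ ∈ Set.Icc cT cR) ∧
    (∀ μ₁ μ₂ : ℝ,
        Module.End.HasEigenvalue
          (R ∘ₗ Binv ∘ₗ LinearMap.adjoint R ∘ₗ A : Module.End ℝ H) μ₁ →
        Module.End.HasEigenvalue
          (R ∘ₗ Binv ∘ₗ LinearMap.adjoint R ∘ₗ A : Module.End ℝ H) μ₂ →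
        μ₁ / μ₂ ≤ cR / cT) :=
  stmt2_general A B hApos hBsym hBpos Binv hBinv₂ R cR cT hcT hcont hstab
end

section
/- Let A ∈ ℝ^{n×n} be SPD, with restriction matrices R_i, partition-of-unity matrices D_i satisfying ∑ R_iᵀD_iR_i = I, local SPD matrices A_i^Neu ∈ ℝ^{n_i×n_i} satisfying ∑_{i=1}^N (R_iU)ᵀ A_i^Neu (R_iU) ≤ k₁ UᵀAU for all U ∈ ℝ^n, and projections ξ_{0i} on ℝ^{n_i} such that R_iᵀ D_i ξ_{0i} R_i U lies in the coarse space V_G = range(Z) for all U and all i. Define τ₀ := max_{1≤j≤N} max_{V_j ≠ 0} ((R_j A R_jᵀ D_j(I−ξ_{0j})V_j, D_j(I−ξ_{0j})V_j) / (A_j^Neu V_j, V_j)). Then for every U ∈ ℝ^n there exists (U₀, (U_i)) with R_AS(U₀,(U_i)) = U and (E U₀, U₀) + ∑_{i=1}^N (R_i A R_iᵀ U_i, U_i) ≤ (1 + k₁ τ₀) UᵀAU. -/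
/-!
Take for `U₀` the coefficients of the `A`-orthogonal projection `P₀ U` onto the coarse space,
and `Uᵢ = Dᵢ (I - ξ₀ᵢ) Rᵢ U`. By the partition of unity and the compatibility of the `ξ₀ᵢ`,
`∑ Rᵢᵀ Uᵢ` differs from `U` by a coarse vector, which `I - P₀` annihilates, so the pair
decomposes `U`. The coarse energy is at most `UᵀAU` by `A`-orthogonality, each local energy is
at most `τ₀` times the Neumann energy of `Rᵢ U`, and these sum to at most `k₁ UᵀAU`; here
`τ₀ ≥ 0` because some local space is nontrivial unless `n = 0`.
-/

open Matrix

section Galerkin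

variable {m k : Type*} [Fintype m] [Fintype k]

/-- The defect `U ⬝ᵥ A U - E x ⬝ᵥ x` is the energy `(U - Z x) ⬝ᵥ A (U - Z x)` of the
Galerkin error. -/
lemma galerkin_energy_le {A : Matrix m m ℝ} (hA : A.PosSemidef) {Z : Matrix m k ℝ}
    {x : k → ℝ} {U : m → ℝ} (hx : (Zᵀ * A * Z) *ᵥ x = (Zᵀ * A) *ᵥ U) :
    ((Zᵀ * A * Z) *ᵥ x) ⬝ᵥ x ≤ U ⬝ᵥ (A *ᵥ U) := by
  have hAt : Aᵀ = A := (isHermitian_iff_isSymm.mp hA.1).eq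
  have hZ : ∀ v, (Z *ᵥ x) ⬝ᵥ (A *ᵥ v) = x ⬝ᵥ ((Zᵀ * A) *ᵥ v) := fun v => by
    rw [← mulVec_mulVec, dotProduct_mulVec x, vecMul_transpose]
  have hsymm : U ⬝ᵥ (A *ᵥ (Z *ᵥ x)) = (Z *ᵥ x) ⬝ᵥ (A *ᵥ U) := by
    rw [dotProduct_mulVec, ← mulVec_transpose, hAt, dotProduct_comm]
  have hcross : (Z *ᵥ x) ⬝ᵥ (A *ᵥ U) = ((Zᵀ * A * Z) *ᵥ x) ⬝ᵥ x := by
    rw [hZ, ← hx, dotProduct_comm]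
  have hcoarse : (Z *ᵥ x) ⬝ᵥ (A *ᵥ (Z *ᵥ x)) = ((Zᵀ * A * Z) *ᵥ x) ⬝ᵥ x := by
    rw [hZ, mulVec_mulVec, dotProduct_comm]
  have hw := hA.dotProduct_mulVec_nonneg (U - Z *ᵥ x)
  simp only [star_trivial, mulVec_sub, sub_dotProduct, dotProduct_sub] at hw
  linarith

variable [DecidableEq k]

noncomputable def coarseProjection (A : Matrix m m ℝ) (Z : Matrix m k ℝ) : Matrix m m ℝ :=
  Z * (Zᵀ * A * Z)⁻¹ * Zᵀ * A

lemma isUnit_det_transpose_mul_mul {A : Matrix m m ℝ} (hA : A.PosDef) {Z : Matrix m k ℝ}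
    (hZ : Function.Injective Z.mulVec) : IsUnit (Zᵀ * A * Z).det := by
  have hE : (Zᵀ * A * Z).PosDef := by
    simpa [conjTranspose_eq_transpose_of_trivial] using hA.conjTranspose_mul_mul_same hZ
  exact (isUnit_iff_isUnit_det _).mp hE.isUnit

lemma coarseProjection_mul_self {A : Matrix m m ℝ} {Z : Matrix m k ℝ}
    (hE : IsUnit (Zᵀ * A * Z).det) : coarseProjection A Z * Z = Z :=
  calc coarseProjection A Z * Z = Z * ((Zᵀ * A * Z)⁻¹ * (Zᵀ * A * Z)) := by
        simp only [coarseProjection, Matrix.mul_assoc]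
    _ = Z := by rw [nonsing_inv_mul _ hE, Matrix.mul_one]

lemma galerkin_add_one_sub_coarseProjection [DecidableEq m] {A : Matrix m m ℝ}
    {Z : Matrix m k ℝ} (hE : IsUnit (Zᵀ * A * Z).det) (U : m → ℝ) (c : k → ℝ) :
    Z *ᵥ ((Zᵀ * A * Z)⁻¹ *ᵥ ((Zᵀ * A) *ᵥ U)) + (1 - coarseProjection A Z) *ᵥ (U - Z *ᵥ c) =
      U := by
  have hZU : Z *ᵥ ((Zᵀ * A * Z)⁻¹ *ᵥ ((Zᵀ * A) *ᵥ U)) = coarseProjection A Z *ᵥ U := by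
    simp only [mulVec_mulVec, coarseProjection, Matrix.mul_assoc]
  have hZc : coarseProjection A Z *ᵥ (Z *ᵥ c) = Z *ᵥ c := by
    rw [mulVec_mulVec, coarseProjection_mul_self hE]
  rw [hZU, sub_mulVec, one_mulVec, mulVec_sub, hZc]
  abel

lemma transpose_mul_mul_mulVec_galerkin {A : Matrix m m ℝ} {Z : Matrix m k ℝ}
    (hE : IsUnit (Zᵀ * A * Z).det) (U : m → ℝ) :
    (Zᵀ * A * Z) *ᵥ ((Zᵀ * A * Z)⁻¹ *ᵥ ((Zᵀ * A) *ᵥ U)) = (Zᵀ * A) *ᵥ U := by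
  rw [mulVec_mulVec, mul_nonsing_inv _ hE, one_mulVec]

end Galerkin

section PartitionOfUnity

variable {ι m k : Type*} [Fintype ι] [Fintype m] [Fintype k] {κ : ι → Type*}
  [∀ i, Fintype (κ i)]

lemma exists_nonempty_of_sum_eq_one [DecidableEq m] [Nonempty m] {R : ∀ i, Matrix (κ i) m ℝ}
    {D : ∀ i, Matrix (κ i) (κ i) ℝ} (hPoU : ∑ i, (R i)ᵀ * D i * R i = 1) :
    ∃ i, Nonempty (κ i) := by
  by_contra! h
  have hzero : ∀ i, (R i)ᵀ * D i * R i = 0 := fun i => by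
    simp [Subsingleton.elim (R i) 0]
  simp [hzero] at hPoU

lemma exists_sum_transpose_mulVec_eq_sub [DecidableEq m] {R : ∀ i, Matrix (κ i) m ℝ}
    {D ξ : ∀ i, Matrix (κ i) (κ i) ℝ} [∀ i, DecidableEq (κ i)]
    (hPoU : ∑ i, (R i)ᵀ * D i * R i = 1) {Z : Matrix m k ℝ} (U : m → ℝ)
    (hξ : ∀ i, ∃ c, Z *ᵥ c = (R i)ᵀ *ᵥ (D i *ᵥ (ξ i *ᵥ (R i *ᵥ U)))) :
    ∃ c, ∑ i, (R i)ᵀ *ᵥ (D i *ᵥ ((1 - ξ i) *ᵥ (R i *ᵥ U))) = U - Z *ᵥ c := by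
  choose c hc using hξ
  refine ⟨∑ i, c i, ?_⟩
  have hterm : ∀ i, (R i)ᵀ *ᵥ (D i *ᵥ ((1 - ξ i) *ᵥ (R i *ᵥ U))) =
      ((R i)ᵀ * D i * R i) *ᵥ U - Z *ᵥ c i := fun i => by
    rw [hc, sub_mulVec, one_mulVec, mulVec_sub, mulVec_sub, mulVec_mulVec, mulVec_mulVec]
  rw [Finset.sum_congr rfl fun i _ => hterm i, Finset.sum_sub_distrib, ← sum_mulVec, hPoU,
    one_mulVec, mulVec_sum]

end PartitionOfUnity

lemma nonneg_of_le_mul_dotProduct_mulVec {κ : Type*} [Fintype κ] [Nonempty κ]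
    {M : Matrix κ κ ℝ} (hM : M.PosDef) {f : (κ → ℝ) → ℝ} (hf : ∀ V, 0 ≤ f V) {τ : ℝ}
    (h : ∀ V, f V ≤ τ * ((M *ᵥ V) ⬝ᵥ V)) : 0 ≤ τ := by
  have hV : (fun _ => 1 : κ → ℝ) ≠ 0 := fun h => by simpa using congrFun h (Classical.arbitrary κ)
  have hpos := hM.dotProduct_mulVec_pos hV
  rw [star_trivial, dotProduct_comm] at hpos
  exact nonneg_of_mul_nonneg_left ((hf _).trans (h _)) hpos

lemma dotProduct_mulVec_nonneg_mul_mul_transpose {m κ : Type*} [Fintype m] [Fintype κ]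
    {A : Matrix m m ℝ} (hA : A.PosSemidef) (R : Matrix κ m ℝ) (W : κ → ℝ) :
    0 ≤ ((R * A * Rᵀ) *ᵥ W) ⬝ᵥ W := by
  have h := (hA.mul_mul_conjTranspose_same R).dotProduct_mulVec_nonneg W
  rwa [star_trivial, conjTranspose_eq_transpose_of_trivial, dotProduct_comm] at h

theorem stmt7_general {n n0 N : ℕ} (ni : Fin N → ℕ)
    (A : Matrix (Fin n) (Fin n) ℝ) (hA : A.PosDef)
    (R : ∀ i : Fin N, Matrix (Fin (ni i)) (Fin n) ℝ)
    (D : ∀ i : Fin N, Matrix (Fin (ni i)) (Fin (ni i)) ℝ)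
    (hPoU : ∑ i, (R i)ᵀ * D i * R i = 1)
    (ANeu : ∀ i : Fin N, Matrix (Fin (ni i)) (Fin (ni i)) ℝ)
    (hANeu : ∀ i, (ANeu i).PosDef)
    (k1 : ℝ)
    (hk1 : ∀ U : Fin n → ℝ,
      ∑ i, (R i *ᵥ U) ⬝ᵥ (ANeu i *ᵥ (R i *ᵥ U)) ≤ k1 * (U ⬝ᵥ (A *ᵥ U)))
    (Z : Matrix (Fin n) (Fin n0) ℝ)
    (hZ : Function.Injective Z.mulVec)
    (P0 : Matrix (Fin n) (Fin n) ℝ)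
    (hP0 : P0 = Z * (Zᵀ * A * Z)⁻¹ * Zᵀ * A)
    (xi : ∀ i : Fin N, Matrix (Fin (ni i)) (Fin (ni i)) ℝ)
    (hxi : ∀ (i : Fin N) (U : Fin n → ℝ),
      ∃ c : Fin n0 → ℝ, Z *ᵥ c = (R i)ᵀ *ᵥ (D i *ᵥ (xi i *ᵥ (R i *ᵥ U))))
    (τ0 : ℝ)
    (hτ0 : ∀ (j : Fin N) (V : Fin (ni j) → ℝ),
      ((R j * A * (R j)ᵀ) *ᵥ (D j *ᵥ ((1 - xi j) *ᵥ V))) ⬝ᵥ (D j *ᵥ ((1 - xi j) *ᵥ V)) ≤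
        τ0 * ((ANeu j *ᵥ V) ⬝ᵥ V)) :
    ∀ U : Fin n → ℝ,
      ∃ (U0 : Fin n0 → ℝ) (Ui : ∀ i, Fin (ni i) → ℝ),
        Z *ᵥ U0 + (1 - P0) *ᵥ ∑ i, (R i)ᵀ *ᵥ Ui i = U ∧
        ((Zᵀ * A * Z) *ᵥ U0) ⬝ᵥ U0 +
            ∑ i, ((R i * A * (R i)ᵀ) *ᵥ Ui i) ⬝ᵥ Ui i ≤
          (1 + k1 * τ0) * (U ⬝ᵥ (A *ᵥ U)) := by
  intro U
  have hE : IsUnit (Zᵀ * A * Z).det := isUnit_det_transpose_mul_mul hA hZ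
  set Ui : ∀ i, Fin (ni i) → ℝ := fun i => D i *ᵥ ((1 - xi i) *ᵥ (R i *ᵥ U))
  obtain ⟨c, hc⟩ := exists_sum_transpose_mulVec_eq_sub hPoU U fun i => hxi i U
  refine ⟨(Zᵀ * A * Z)⁻¹ *ᵥ ((Zᵀ * A) *ᵥ U), Ui, ?_, ?_⟩
  · rw [hc, hP0]
    exact galerkin_add_one_sub_coarseProjection hE U c
  rcases isEmpty_or_nonempty (Fin n) with hn | hn
  · simp [Subsingleton.elim U 0, Ui]
  obtain ⟨j, hj⟩ := exists_nonempty_of_sum_eq_one hPoU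
  have hτ0_nonneg : 0 ≤ τ0 := nonneg_of_le_mul_dotProduct_mulVec (hANeu j)
    (fun V => dotProduct_mulVec_nonneg_mul_mul_transpose hA.posSemidef (R j) _) (hτ0 j)
  have hcoarse := galerkin_energy_le hA.posSemidef (transpose_mul_mul_mulVec_galerkin hE U)
  have hlocal : ∑ i, ((R i * A * (R i)ᵀ) *ᵥ Ui i) ⬝ᵥ Ui i ≤ τ0 * (k1 * (U ⬝ᵥ (A *ᵥ U))) :=
    calc _ ≤ ∑ i, τ0 * ((ANeu i *ᵥ (R i *ᵥ U)) ⬝ᵥ (R i *ᵥ U)) :=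
          Finset.sum_le_sum fun i _ => hτ0 i _
      _ = τ0 * ∑ i, (R i *ᵥ U) ⬝ᵥ (ANeu i *ᵥ (R i *ᵥ U)) := by
          simp only [Finset.mul_sum, dotProduct_comm]
      _ ≤ τ0 * (k1 * (U ⬝ᵥ (A *ᵥ U))) := mul_le_mul_of_nonneg_left (hk1 U) hτ0_nonneg
  linarith

theorem stmt7 {n n0 N : ℕ} (ni : Fin N → ℕ)
    (A : Matrix (Fin n) (Fin n) ℝ) (hA : A.PosDef)
    (R : ∀ i : Fin N, Matrix (Fin (ni i)) (Fin n) ℝ)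
    (D : ∀ i : Fin N, Matrix (Fin (ni i)) (Fin (ni i)) ℝ)
    (hD : ∀ i, (D i).IsDiag)
    (hPoU : ∑ i, (R i)ᵀ * D i * R i = 1)
    (ANeu : ∀ i : Fin N, Matrix (Fin (ni i)) (Fin (ni i)) ℝ)
    (hANeu : ∀ i, (ANeu i).PosDef)
    (k1 : ℝ)
    (hk1 : ∀ U : Fin n → ℝ,
      ∑ i, (R i *ᵥ U) ⬝ᵥ (ANeu i *ᵥ (R i *ᵥ U)) ≤ k1 * (U ⬝ᵥ (A *ᵥ U)))
    (Z : Matrix (Fin n) (Fin n0) ℝ)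
    (hZ : Function.Injective Z.mulVec)
    (P0 : Matrix (Fin n) (Fin n) ℝ)
    (hP0 : P0 = Z * (Zᵀ * A * Z)⁻¹ * Zᵀ * A)
    (xi : ∀ i : Fin N, Matrix (Fin (ni i)) (Fin (ni i)) ℝ)
    (hxi : ∀ (i : Fin N) (U : Fin n → ℝ),
      ∃ c : Fin n0 → ℝ, Z *ᵥ c = (R i)ᵀ *ᵥ (D i *ᵥ (xi i *ᵥ (R i *ᵥ U))))
    (τ0 : ℝ)
    (hτ0 : ∀ (j : Fin N) (V : Fin (ni j) → ℝ),
      ((R j * A * (R j)ᵀ) *ᵥ (D j *ᵥ ((1 - xi j) *ᵥ V))) ⬝ᵥ (D j *ᵥ ((1 - xi j) *ᵥ V)) ≤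
        τ0 * ((ANeu j *ᵥ V) ⬝ᵥ V)) :
    ∀ U : Fin n → ℝ,
      ∃ (U0 : Fin n0 → ℝ) (Ui : ∀ i, Fin (ni i) → ℝ),
        Z *ᵥ U0 + (1 - P0) *ᵥ ∑ i, (R i)ᵀ *ᵥ Ui i = U ∧
        ((Zᵀ * A * Z) *ᵥ U0) ⬝ᵥ U0 +
            ∑ i, ((R i * A * (R i)ᵀ) *ᵥ Ui i) ⬝ᵥ Ui i ≤
          (1 + k1 * τ0) * (U ⬝ᵥ (A *ᵥ U)) :=
  stmt7_general ni A hA R D hPoU ANeu hANeu k1 hk1 Z hZ P0 hP0 xi hxi τ0 hτ0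
end

section
/- Let M ∈ ℝ^{m×m} be symmetric positive semidefinite and N ∈ ℝ^{m×m} symmetric positive definite, and consider the generalized eigenvalue problem M v = λ N v with eigenpairs (v_k, λ_k), k = 1,…,m, N-orthonormal. For a threshold τ > 0 let π be the projection onto span{v_k : λ_k > τ} parallel to span{v_k : λ_k ≤ τ}. Then for all u ∈ ℝ^m, ((I − π)u)ᵀ M (I − π)u ≤ τ uᵀ N u. -/
/-!
Expand `u = ∑ cₖ vₖ` in the `N`-orthonormal eigenbasis, so that `uᵀ N u = ∑ cₖ²`. Then `(I - π) u`
keeps exactly the modes with `λₖ ≤ τ`, and its `M`-energy is `∑_{λₖ ≤ τ} λₖ cₖ² ≤ τ ∑ cₖ²`.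
-/

open Matrix Finset
open scoped Classical

section Orthonormal

variable {n R : Type*} [Fintype n] [DecidableEq n] [CommRing R] {N : Matrix n n R} {v : n → n → R}

lemma sum_smul_dotProduct_mulVec_sum_smul
    (horth : ∀ k l, (N *ᵥ v k) ⬝ᵥ v l = if k = l then 1 else 0) (s : Finset n) (a b : n → R) :
    (∑ k ∈ s, a k • v k) ⬝ᵥ (N *ᵥ ∑ l ∈ s, b l • v l) = ∑ k ∈ s, a k * b k := by
  simp only [mulVec_sum, mulVec_smul, sum_dotProduct, dotProduct_sum, smul_dotProduct,
    dotProduct_smul, dotProduct_comm (v _) (N *ᵥ v _), horth, smul_eq_mul]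
  simp [mul_comm]

lemma sum_dotProduct_smul_eq_of_orthonormal (hN : N.IsSymm)
    (horth : ∀ k l, (N *ᵥ v k) ⬝ᵥ v l = if k = l then 1 else 0) (u : n → R) :
    ∑ k, ((N *ᵥ v k) ⬝ᵥ u) • v k = u := by
  let V : Matrix n n R := of v
  have hVNV : V * N * Vᵀ = 1 := by
    ext k l
    rw [mul_mul_apply, transpose_transpose, dotProduct_comm, one_apply]
    exact (horth l k).trans (if_congr eq_comm rfl rfl)
  have hVN : Vᵀ * (V * N) = 1 := mul_eq_one_comm.mp hVNV
  calc ∑ k, ((N *ᵥ v k) ⬝ᵥ u) • v k = Vᵀ *ᵥ ((V * N) *ᵥ u) := by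
        rw [mulVec_transpose, vecMul_eq_sum]
        congr! with k
        rw [← mulVec_mulVec, mulVec, dotProduct_mulVec, ← mulVec_transpose, hN.eq]
        rfl
    _ = u := by rw [mulVec_mulVec, hVN, one_mulVec]

end Orthonormal

lemma mulVec_sum_smul_of_eigen {n R : Type*} [Fintype n] [CommRing R] {M N : Matrix n n R}
    {v : n → n → R} {lam : n → R} (heig : ∀ k, M *ᵥ v k = lam k • (N *ᵥ v k))
    (s : Finset n) (b : n → R) :
    M *ᵥ ∑ k ∈ s, b k • v k = N *ᵥ ∑ k ∈ s, (lam k * b k) • v k := by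
  simp only [mulVec_sum, mulVec_smul, heig, smul_smul, mul_comm]

theorem stmt9_general {m : ℕ}
    (M N : Matrix (Fin m) (Fin m) ℝ)
    (hN : N.PosDef)
    (v : Fin m → (Fin m → ℝ)) (lam : Fin m → ℝ)
    (heig : ∀ k, M *ᵥ v k = lam k • (N *ᵥ v k))
    (horth : ∀ k l, (N *ᵥ v k) ⬝ᵥ v l = if k = l then 1 else 0)
    (τ : ℝ) (hτ : 0 < τ)
    (π : (Fin m → ℝ) → (Fin m → ℝ))
    (hπ : ∀ u, π u = ∑ k ∈ Finset.univ.filter (fun k => τ < lam k),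
      ((N *ᵥ v k) ⬝ᵥ u) • v k) :
    ∀ u : Fin m → ℝ,
      (u - π u) ⬝ᵥ (M *ᵥ (u - π u)) ≤ τ * (u ⬝ᵥ (N *ᵥ u)) := by
  intro u
  set F := univ.filter (fun k => τ < lam k)
  set c : Fin m → ℝ := fun k => (N *ᵥ v k) ⬝ᵥ u
  have hexp : ∑ k, c k • v k = u :=
    sum_dotProduct_smul_eq_of_orthonormal (isHermitian_iff_isSymm.mp hN.isHermitian) horth u
  have hlow : u - π u = ∑ k ∈ Fᶜ, c k • v k := by
    rw [hπ, sub_eq_iff_eq_add, sum_compl_add_sum]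
    exact hexp.symm
  have hNu : u ⬝ᵥ (N *ᵥ u) = ∑ k, c k * c k := by
    rw [← sum_smul_dotProduct_mulVec_sum_smul horth, hexp]
  rw [hlow, mulVec_sum_smul_of_eigen heig, sum_smul_dotProduct_mulVec_sum_smul horth, hNu]
  calc ∑ k ∈ Fᶜ, c k * (lam k * c k)
      ≤ ∑ k ∈ Fᶜ, τ * (c k * c k) := by
        refine sum_le_sum fun k hk => ?_
        have hlam : lam k ≤ τ := by simpa [F] using hk
        nlinarith [mul_self_nonneg (c k)]
    _ ≤ τ * ∑ k, c k * c k := by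
        rw [← mul_sum]
        gcongr
        exacts [fun k _ _ => mul_self_nonneg (c k), subset_univ _]

theorem stmt9 {m : ℕ}
    (M N : Matrix (Fin m) (Fin m) ℝ)
    (hM : M.PosSemidef) (hN : N.PosDef)
    (v : Fin m → (Fin m → ℝ)) (lam : Fin m → ℝ)
    (heig : ∀ k, M *ᵥ v k = lam k • (N *ᵥ v k))
    (horth : ∀ k l, (N *ᵥ v k) ⬝ᵥ v l = if k = l then 1 else 0)
    (τ : ℝ) (hτ : 0 < τ)
    (π : (Fin m → ℝ) → (Fin m → ℝ))
    (hπ : ∀ u, π u = ∑ k ∈ Finset.univ.filter (fun k => τ < lam k),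
      ((N *ᵥ v k) ⬝ᵥ u) • v k) :
    ∀ u : Fin m → ℝ,
      (u - π u) ⬝ᵥ (M *ᵥ (u - π u)) ≤ τ * (u ⬝ᵥ (N *ᵥ u)) :=
  stmt9_general M N hN v lam heig horth τ hτ π hπ
end

section
/- In the two-level additive Schwarz setting with GenEO-enriched coarse space V₀ = V_G + V^τ_GenEO (where V^τ_GenEO contains all vectors R_jᵀD_j(I−ξ_{0j})V_{jk} for eigenpairs of the local GEVPs (I−ξ_{0j}ᵀ)D_jR_jAR_jᵀD_j(I−ξ_{0j})V_{jk} = λ_{jk}A_j^Neu V_{jk} with λ_{jk} > τ), the operator R_{AS,2} admits a stable decomposition with constant c_T = 1/(1 + k₁τ): for every U ∈ ℝ^n there exists (U₀,(U_i)) with R_{AS,2}(U₀,(U_i)) = U and (EU₀,U₀) + ∑_{i=1}^N (R_iAR_iᵀU_i, U_i) ≤ (1 + k₁τ) UᵀAU. -/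
/-!
Take `Uᵢ = Dᵢ(I − ξ₀ᵢ)(I − πᵢ)RᵢU` and `U₀ = E⁻¹ZᵀAU`, so that `ZU₀ = P₀U`. Splitting the partition
of unity `U = ∑ RᵢᵀDᵢRᵢU` along `ξ₀ᵢ` and `πᵢ` shows that `U − ∑ RᵢᵀUᵢ` lies in `V₀ = range Z`, which
`P₀` fixes; hence `ZU₀ + (I − P₀) ∑ RᵢᵀUᵢ = U`. The coarse energy `‖P₀U‖²_A` is at most `‖U‖²_A`
because `P₀` is `A`-orthogonal, and the GenEO bound makes each local energy at most
`τ (Aᵢ^Neu RᵢU, RᵢU)`, which sum to at most `k₁ τ ‖U‖²_A`.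
-/

open Matrix

section EnergyProjection

variable {m k : Type*} [Fintype m] [Fintype k]

lemma mulVec_dotProduct_eq_dotProduct_transpose_mulVec (B : Matrix m k ℝ) (x : k → ℝ)
    (y : m → ℝ) : (B *ᵥ x) ⬝ᵥ y = x ⬝ᵥ (Bᵀ *ᵥ y) := by
  rw [dotProduct_comm, dotProduct_mulVec, ← mulVec_transpose, dotProduct_comm]

lemma transpose_mul_mul_mulVec_dotProduct (A : Matrix m m ℝ) (Z : Matrix m k ℝ) (x : k → ℝ) :
    ((Zᵀ * A * Z) *ᵥ x) ⬝ᵥ x = (Z *ᵥ x) ⬝ᵥ (A *ᵥ (Z *ᵥ x)) := by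
  rw [dotProduct_comm, ← mulVec_mulVec, ← mulVec_mulVec,
    ← mulVec_dotProduct_eq_dotProduct_transpose_mulVec]

lemma le_dotProduct_mulVec_add_of_orthogonal {A : Matrix m m ℝ} (hA : A.PosSemidef)
    {v w : m → ℝ} (h : v ⬝ᵥ (A *ᵥ w) = 0) :
    v ⬝ᵥ (A *ᵥ v) ≤ (v + w) ⬝ᵥ (A *ᵥ (v + w)) := by
  have hsymm : w ⬝ᵥ (A *ᵥ v) = v ⬝ᵥ (A *ᵥ w) := by
    rw [dotProduct_comm, mulVec_dotProduct_eq_dotProduct_transpose_mulVec,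
      (isHermitian_iff_isSymm.mp hA.1).eq]
  have hw : 0 ≤ w ⬝ᵥ (A *ᵥ w) := by simpa using hA.dotProduct_mulVec_nonneg w
  simp only [mulVec_add, dotProduct_add, add_dotProduct]
  linarith

variable [DecidableEq k]

/-- The `A`-orthogonal projection onto the column space of `Z` (the paper's `P₀`). -/
noncomputable def energyProjection (A : Matrix m m ℝ) (Z : Matrix m k ℝ) : Matrix m m ℝ :=
  Z * (Zᵀ * A * Z)⁻¹ * Zᵀ * A

variable {A : Matrix m m ℝ} {Z : Matrix m k ℝ}

lemma energyProjection_mulVec (u : m → ℝ) :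
    energyProjection A Z *ᵥ u = Z *ᵥ ((Zᵀ * A * Z)⁻¹ *ᵥ (Zᵀ *ᵥ (A *ᵥ u))) := by
  simp only [energyProjection, mulVec_mulVec, Matrix.mul_assoc]

lemma energyProjection_mul_self (hE : IsUnit (Zᵀ * A * Z)) : energyProjection A Z * Z = Z := by
  simp only [energyProjection, Matrix.mul_assoc]
  rw [← Matrix.mul_assoc Zᵀ A Z, nonsing_inv_mul _ ((isUnit_iff_isUnit_det _).mp hE),
    Matrix.mul_one]

lemma transpose_mulVec_mulVec_sub_energyProjection (hE : IsUnit (Zᵀ * A * Z)) (u : m → ℝ) :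
    Zᵀ *ᵥ (A *ᵥ (u - energyProjection A Z *ᵥ u)) = 0 := by
  rw [energyProjection_mulVec, mulVec_sub, mulVec_sub]
  simp only [mulVec_mulVec, ← Matrix.mul_assoc]
  rw [mul_nonsing_inv _ ((isUnit_iff_isUnit_det _).mp hE), Matrix.one_mul, sub_self]

lemma dotProduct_mulVec_energyProjection_le (hA : A.PosSemidef) (hE : IsUnit (Zᵀ * A * Z))
    (u : m → ℝ) :
    (energyProjection A Z *ᵥ u) ⬝ᵥ (A *ᵥ (energyProjection A Z *ᵥ u)) ≤ u ⬝ᵥ (A *ᵥ u) := by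
  have hortho (x : k → ℝ) : (Z *ᵥ x) ⬝ᵥ (A *ᵥ (u - energyProjection A Z *ᵥ u)) = 0 := by
    rw [mulVec_dotProduct_eq_dotProduct_transpose_mulVec,
      transpose_mulVec_mulVec_sub_energyProjection hE, dotProduct_zero]
  have h := hortho ((Zᵀ * A * Z)⁻¹ *ᵥ (Zᵀ *ᵥ (A *ᵥ u)))
  rw [← energyProjection_mulVec] at h
  simpa using le_dotProduct_mulVec_add_of_orthogonal hA h

lemma energyProjection_mulVec_add_one_sub_mulVec [DecidableEq m] (hE : IsUnit (Zᵀ * A * Z))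
    {u w : m → ℝ} (h : u - w ∈ LinearMap.range Z.mulVecLin) :
    energyProjection A Z *ᵥ u + (1 - energyProjection A Z) *ᵥ w = u := by
  obtain ⟨c, hc⟩ := h
  have hfix : energyProjection A Z *ᵥ (u - w) = u - w := by
    rw [← hc, mulVecLin_apply, mulVec_mulVec, energyProjection_mul_self hE]
  rw [mulVec_sub] at hfix
  rw [sub_mulVec, one_mulVec]
  linear_combination hfix

end EnergyProjection

section LocalDecomposition

variable {m ι : Type*} [Fintype m] [Fintype ι] {κ : ι → Type*} [∀ i, Fintype (κ i)]
  (R : ∀ i, Matrix (κ i) m ℝ) (D : ∀ i, Matrix (κ i) (κ i) ℝ)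

lemma sum_transpose_mulVec_mulVec_mulVec [DecidableEq m] (hPoU : ∑ i, (R i)ᵀ * D i * R i = 1)
    (U : m → ℝ) : ∑ i, (R i)ᵀ *ᵥ (D i *ᵥ (R i *ᵥ U)) = U := by
  conv_rhs => rw [← one_mulVec U, ← hPoU, sum_mulVec]
  simp only [mulVec_mulVec, Matrix.mul_assoc]

variable [∀ i, DecidableEq (κ i)]

lemma sub_sum_mem_of_mem [DecidableEq m] (hPoU : ∑ i, (R i)ᵀ * D i * R i = 1)
    (xi π : ∀ i, Matrix (κ i) (κ i) ℝ) {V : Submodule ℝ (m → ℝ)} {U : m → ℝ}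
    (hxi : ∀ i, (R i)ᵀ *ᵥ (D i *ᵥ (xi i *ᵥ (R i *ᵥ U))) ∈ V)
    (hπ : ∀ i, (R i)ᵀ *ᵥ (D i *ᵥ ((1 - xi i) *ᵥ (π i *ᵥ (R i *ᵥ U)))) ∈ V) :
    U - ∑ i, (R i)ᵀ *ᵥ (D i *ᵥ ((1 - xi i) *ᵥ ((1 - π i) *ᵥ (R i *ᵥ U)))) ∈ V := by
  suffices ∑ i, ((R i)ᵀ *ᵥ (D i *ᵥ (R i *ᵥ U)) -
      (R i)ᵀ *ᵥ (D i *ᵥ ((1 - xi i) *ᵥ ((1 - π i) *ᵥ (R i *ᵥ U))))) ∈ V by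
    rwa [Finset.sum_sub_distrib, sum_transpose_mulVec_mulVec_mulVec R D hPoU] at this
  refine Submodule.sum_mem _ fun i _ => ?_
  convert V.add_mem (hxi i) (hπ i) using 1
  simp only [sub_mulVec, one_mulVec, mulVec_sub]
  abel

end LocalDecomposition

theorem stmt10_general {n n0 N : ℕ} (ni : Fin N → ℕ)
    (A : Matrix (Fin n) (Fin n) ℝ) (hA : A.PosDef)
    (R : ∀ i : Fin N, Matrix (Fin (ni i)) (Fin n) ℝ)
    (D : ∀ i : Fin N, Matrix (Fin (ni i)) (Fin (ni i)) ℝ)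
    (hPoU : ∑ i, (R i)ᵀ * D i * R i = 1)
    (ANeu : ∀ i : Fin N, Matrix (Fin (ni i)) (Fin (ni i)) ℝ)
    (k1 : ℝ)
    (hk1 : ∀ U : Fin n → ℝ,
      ∑ i, (R i *ᵥ U) ⬝ᵥ (ANeu i *ᵥ (R i *ᵥ U)) ≤ k1 * (U ⬝ᵥ (A *ᵥ U)))
    (Z : Matrix (Fin n) (Fin n0) ℝ)
    (hZ : Function.Injective Z.mulVec)
    (P0 : Matrix (Fin n) (Fin n) ℝ)
    (hP0 : P0 = Z * (Zᵀ * A * Z)⁻¹ * Zᵀ * A)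
    (xi : ∀ i : Fin N, Matrix (Fin (ni i)) (Fin (ni i)) ℝ)
    (hxi : ∀ (i : Fin N) (U : Fin n → ℝ),
      ∃ c : Fin n0 → ℝ, Z *ᵥ c = (R i)ᵀ *ᵥ (D i *ᵥ (xi i *ᵥ (R i *ᵥ U))))
    (π : ∀ i : Fin N, Matrix (Fin (ni i)) (Fin (ni i)) ℝ)
    (τ : ℝ) (hτ : 0 < τ)
    (hπbound : ∀ (j : Fin N) (Uj : Fin (ni j) → ℝ),
      ((R j * A * (R j)ᵀ) *ᵥ (D j *ᵥ ((1 - xi j) *ᵥ ((1 - π j) *ᵥ Uj)))) ⬝ᵥ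
          (D j *ᵥ ((1 - xi j) *ᵥ ((1 - π j) *ᵥ Uj))) ≤
        τ * ((ANeu j *ᵥ Uj) ⬝ᵥ Uj))
    (hGenEO : ∀ (j : Fin N) (Uj : Fin (ni j) → ℝ),
      ∃ c : Fin n0 → ℝ, Z *ᵥ c = (R j)ᵀ *ᵥ (D j *ᵥ ((1 - xi j) *ᵥ (π j *ᵥ Uj)))) :
    ∀ U : Fin n → ℝ,
      ∃ (U0 : Fin n0 → ℝ) (Ui : ∀ i, Fin (ni i) → ℝ),
        Z *ᵥ U0 + (1 - P0) *ᵥ ∑ i, (R i)ᵀ *ᵥ Ui i = U ∧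
        ((Zᵀ * A * Z) *ᵥ U0) ⬝ᵥ U0 +
            ∑ i, ((R i * A * (R i)ᵀ) *ᵥ Ui i) ⬝ᵥ Ui i ≤
          (1 + k1 * τ) * (U ⬝ᵥ (A *ᵥ U)) := by
  intro U
  obtain rfl : P0 = energyProjection A Z := hP0
  have hE : IsUnit (Zᵀ * A * Z) := by
    simpa using (hA.conjTranspose_mul_mul_same hZ).isUnit
  set Ui : ∀ i, Fin (ni i) → ℝ := fun i => D i *ᵥ ((1 - xi i) *ᵥ ((1 - π i) *ᵥ (R i *ᵥ U)))
  have hcoarse : U - ∑ i, (R i)ᵀ *ᵥ Ui i ∈ LinearMap.range Z.mulVecLin :=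
    sub_sum_mem_of_mem R D hPoU xi π (fun i => hxi i U) (fun i => hGenEO i _)
  refine ⟨(Zᵀ * A * Z)⁻¹ *ᵥ (Zᵀ *ᵥ (A *ᵥ U)), Ui, ?_, ?_⟩
  · rw [← energyProjection_mulVec]
    exact energyProjection_mulVec_add_one_sub_mulVec hE hcoarse
  have hcoarseEnergy : ((Zᵀ * A * Z) *ᵥ ((Zᵀ * A * Z)⁻¹ *ᵥ (Zᵀ *ᵥ (A *ᵥ U)))) ⬝ᵥ
      ((Zᵀ * A * Z)⁻¹ *ᵥ (Zᵀ *ᵥ (A *ᵥ U))) ≤ U ⬝ᵥ (A *ᵥ U) := by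
    rw [transpose_mul_mul_mulVec_dotProduct, ← energyProjection_mulVec]
    exact dotProduct_mulVec_energyProjection_le hA.posSemidef hE U
  have hlocalEnergy : ∑ i, ((R i * A * (R i)ᵀ) *ᵥ Ui i) ⬝ᵥ Ui i ≤ k1 * τ * (U ⬝ᵥ (A *ᵥ U)) :=
    calc ∑ i, ((R i * A * (R i)ᵀ) *ᵥ Ui i) ⬝ᵥ Ui i
        ≤ ∑ i, τ * ((R i *ᵥ U) ⬝ᵥ (ANeu i *ᵥ (R i *ᵥ U))) :=
          Finset.sum_le_sum fun i _ => (hπbound i _).trans_eq (by rw [dotProduct_comm])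
      _ ≤ τ * (k1 * (U ⬝ᵥ (A *ᵥ U))) := by
          rw [← Finset.mul_sum]
          exact mul_le_mul_of_nonneg_left (hk1 U) hτ.le
      _ = k1 * τ * (U ⬝ᵥ (A *ᵥ U)) := by ring
  linarith

theorem stmt10 {n n0 N : ℕ} (ni : Fin N → ℕ)
    (A : Matrix (Fin n) (Fin n) ℝ) (hA : A.PosDef)
    (R : ∀ i : Fin N, Matrix (Fin (ni i)) (Fin n) ℝ)
    (D : ∀ i : Fin N, Matrix (Fin (ni i)) (Fin (ni i)) ℝ)
    (hD : ∀ i, (D i).IsDiag)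
    (hPoU : ∑ i, (R i)ᵀ * D i * R i = 1)
    (ANeu : ∀ i : Fin N, Matrix (Fin (ni i)) (Fin (ni i)) ℝ)
    (hANeu : ∀ i, (ANeu i).PosDef)
    (k1 : ℝ)
    (hk1 : ∀ U : Fin n → ℝ,
      ∑ i, (R i *ᵥ U) ⬝ᵥ (ANeu i *ᵥ (R i *ᵥ U)) ≤ k1 * (U ⬝ᵥ (A *ᵥ U)))
    (Z : Matrix (Fin n) (Fin n0) ℝ)
    (hZ : Function.Injective Z.mulVec)
    (P0 : Matrix (Fin n) (Fin n) ℝ)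
    (hP0 : P0 = Z * (Zᵀ * A * Z)⁻¹ * Zᵀ * A)
    (xi : ∀ i : Fin N, Matrix (Fin (ni i)) (Fin (ni i)) ℝ)
    (hxi : ∀ (i : Fin N) (U : Fin n → ℝ),
      ∃ c : Fin n0 → ℝ, Z *ᵥ c = (R i)ᵀ *ᵥ (D i *ᵥ (xi i *ᵥ (R i *ᵥ U))))
    (π : ∀ i : Fin N, Matrix (Fin (ni i)) (Fin (ni i)) ℝ)
    (τ : ℝ) (hτ : 0 < τ)
    (hπbound : ∀ (j : Fin N) (Uj : Fin (ni j) → ℝ),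
      ((R j * A * (R j)ᵀ) *ᵥ (D j *ᵥ ((1 - xi j) *ᵥ ((1 - π j) *ᵥ Uj)))) ⬝ᵥ
          (D j *ᵥ ((1 - xi j) *ᵥ ((1 - π j) *ᵥ Uj))) ≤
        τ * ((ANeu j *ᵥ Uj) ⬝ᵥ Uj))
    (hGenEO : ∀ (j : Fin N) (Uj : Fin (ni j) → ℝ),
      ∃ c : Fin n0 → ℝ, Z *ᵥ c = (R j)ᵀ *ᵥ (D j *ᵥ ((1 - xi j) *ᵥ (π j *ᵥ Uj)))) :
    ∀ U : Fin n → ℝ,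
      ∃ (U0 : Fin n0 → ℝ) (Ui : ∀ i, Fin (ni i) → ℝ),
        Z *ᵥ U0 + (1 - P0) *ᵥ ∑ i, (R i)ᵀ *ᵥ Ui i = U ∧
        ((Zᵀ * A * Z) *ᵥ U0) ⬝ᵥ U0 +
            ∑ i, ((R i * A * (R i)ᵀ) *ᵥ Ui i) ⬝ᵥ Ui i ≤
          (1 + k1 * τ) * (U ⬝ᵥ (A *ᵥ U)) :=
  stmt10_general ni A hA R D hPoU ANeu k1 hk1 Z hZ P0 hP0 xi hxi π τ hτ hπbound hGenEO
end
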